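/- Let R* = Σ_{i=0}^∞ (1/(μ*_i b*_i)) Σ_{j=0}^i μ*_j (a value in [0,∞]). Then R* = Σ_{j=0}^∞ (H_j²/(μ_j b_j)) Σ_{i=j}^∞ μ_{i+1}/(H_i H_{i+1}) and R* ≤ μ² · S, where S = Σ_{k=0}^∞ (1/(μ_k b_k)) Σ_{i=k+1}^∞ μ_i. In particular, if S < ∞ then R* < ∞ (the dual chain has exit boundary at infinity). -/

import Mathlib

/-!
Write `M = Σ μ_i`. For any nonvanishing sequence `H`, the masses of the rates
`a*_i = (H_{i-1}/H_i) b_i`, `b*_i = (H_{i+1}/H_i) a_{i+1}` have the closed form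
`μ*_i = κ H_i² / (μ_i b_i)` with `κ = b_0 / H_0²`. Hence the `i`-th term of `R*` factors as
`Σ_{j ≤ i} c_i d_j` with `c_i = μ_{i+1} / (H_i H_{i+1})` and `d_j = H_j² / (μ_j b_j)`, and swapping
the triangular double sum (legitimate in `ℝ≥0∞`) gives the formula for `R*`. The bound follows
from `M⁻¹ = H_0 ≤ H_i ≤ 1`, which gives `d_j ≤ 1 / (μ_j b_j)` and `c_i ≤ M² μ_{i+1}`.
-/

/-- `μ_0 = 1`, `μ_i = (b_0 ⋯ b_{i-1})/(a_1 ⋯ a_i)` for `i ≥ 1`. -/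
noncomputable def bdMu (a b : ℕ → ℝ) (i : ℕ) : ℝ :=
  (∏ k ∈ Finset.range i, b k) / (∏ k ∈ Finset.range i, a (k + 1))

/-- The stationary weights `π_i = μ_i / μ`, where `μ = Σ_j μ_j`. -/
noncomputable def bdPi (a b : ℕ → ℝ) (i : ℕ) : ℝ :=
  bdMu a b i / ∑' j : ℕ, bdMu a b j

/-- `H_i = Σ_{j=0}^i π_j`. -/
noncomputable def bdH (a b : ℕ → ℝ) (i : ℕ) : ℝ :=
  ∑ j ∈ Finset.range (i + 1), bdPi a b j

/-- Dual death rates `a*_i = (H_{i−1}/H_i)·b_i` (used for `i ≥ 1`). -/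
noncomputable def bdAStar (a b : ℕ → ℝ) (i : ℕ) : ℝ :=
  (bdH a b (i - 1) / bdH a b i) * b i

/-- Dual birth rates `b*_i = (H_{i+1}/H_i)·a_{i+1}`. -/
noncomputable def bdBStar (a b : ℕ → ℝ) (i : ℕ) : ℝ :=
  (bdH a b (i + 1) / bdH a b i) * a (i + 1)

/-- Dual masses `μ*_0 = 1`, `μ*_i = (b*_0 ⋯ b*_{i−1})/(a*_1 ⋯ a*_i)`. -/
noncomputable def bdMuStar (a b : ℕ → ℝ) (i : ℕ) : ℝ :=
  bdMu (bdAStar a b) (bdBStar a b) i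

open Finset

theorem ENNReal.tsum_sum_range_succ_eq_tsum_tsum_add (G : ℕ → ℕ → ENNReal) :
    ∑' i : ℕ, ∑ j ∈ range (i + 1), G i j = ∑' j : ℕ, ∑' k : ℕ, G (j + k) j := by
  rw [← ENNReal.tsum_prod, ← HasAntidiagonal.sigmaAntidiagonalEquivProd.tsum_eq,
    ENNReal.tsum_sigma']
  refine tsum_congr fun i => ?_
  simp only [HasAntidiagonal.sigmaAntidiagonalEquivProd_apply]
  rw [Finset.tsum_subtype (antidiagonal i) (fun p => G (p.1 + p.2) p.1),
    Nat.sum_antidiagonal_eq_sum_range_succ_mk]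
  refine sum_congr rfl fun j hj => ?_
  rw [Nat.add_sub_cancel' (Nat.lt_succ_iff.mp (mem_range.mp hj))]

section Rates

variable (a b : ℕ → ℝ)

lemma bdMu_zero : bdMu a b 0 = 1 := by simp [bdMu]

lemma bdMu_succ (i : ℕ) : bdMu a b (i + 1) = bdMu a b i * b i / a (i + 1) := by
  simp only [bdMu, prod_range_succ]
  ring

variable {a b}

lemma bdMu_ne_zero (ha : ∀ i, 1 ≤ i → a i ≠ 0) (hb : ∀ i, b i ≠ 0) (i : ℕ) :
    bdMu a b i ≠ 0 :=
  div_ne_zero (prod_ne_zero_iff.2 fun k _ => hb k)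
    (prod_ne_zero_iff.2 fun k _ => ha (k + 1) (Nat.le_add_left 1 k))

lemma bdMu_pos (ha : ∀ i, 1 ≤ i → 0 < a i) (hb : ∀ i, 0 < b i) (i : ℕ) : 0 < bdMu a b i :=
  div_pos (prod_pos fun k _ => hb k) (prod_pos fun k _ => ha (k + 1) (Nat.le_add_left 1 k))

lemma bdMu_dualRates_eq {H : ℕ → ℝ} (ha : ∀ i, 1 ≤ i → a i ≠ 0) (hb : ∀ i, b i ≠ 0)
    (hH : ∀ i, H i ≠ 0) (i : ℕ) :
    bdMu (fun i => H (i - 1) / H i * b i) (fun i => H (i + 1) / H i * a (i + 1)) i =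
      H i ^ 2 * b 0 / (H 0 ^ 2 * bdMu a b i * b i) := by
  induction i with
  | zero => simp [bdMu_zero, hH 0, hb 0]
  | succ n ih =>
    rw [bdMu_succ, ih, bdMu_succ, Nat.add_sub_cancel]
    field_simp [hH 0, hH n, hH (n + 1), bdMu_ne_zero ha hb n, hb n, hb (n + 1),
      ha (n + 1) (Nat.le_add_left 1 n)]

lemma bdMu_dualRates_term_eq {H : ℕ → ℝ} (ha : ∀ i, 1 ≤ i → a i ≠ 0) (hb : ∀ i, b i ≠ 0)
    (hH : ∀ i, H i ≠ 0) (i : ℕ) :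
    let μH := bdMu (fun i => H (i - 1) / H i * b i) (fun i => H (i + 1) / H i * a (i + 1))
    1 / (μH i * (H (i + 1) / H i * a (i + 1))) * ∑ j ∈ range (i + 1), μH j =
      ∑ j ∈ range (i + 1),
        bdMu a b (i + 1) / (H i * H (i + 1)) * (H j ^ 2 / (bdMu a b j * b j)) := by
  simp only [bdMu_dualRates_eq ha hb hH, mul_sum]
  refine sum_congr rfl fun j _ => ?_
  rw [bdMu_succ]
  field_simp [hH 0, hH i, hH j, hH (i + 1), bdMu_ne_zero ha hb i, bdMu_ne_zero ha hb j, hb 0,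
    hb i, hb j, ha (i + 1) (Nat.le_add_left 1 i)]

end Rates

section Stationary

variable {a b : ℕ → ℝ} (ha : ∀ i, 1 ≤ i → 0 < a i) (hb : ∀ i, 0 < b i)
  (hmu : Summable (bdMu a b))
include ha hb hmu

lemma tsum_bdMu_pos : 0 < ∑' j, bdMu a b j :=
  hmu.tsum_pos (fun j => (bdMu_pos ha hb j).le) 0 (bdMu_pos ha hb 0)

lemma bdPi_pos (i : ℕ) : 0 < bdPi a b i := div_pos (bdMu_pos ha hb i) (tsum_bdMu_pos ha hb hmu)

lemma bdH_pos (i : ℕ) : 0 < bdH a b i :=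
  sum_pos (fun j _ => bdPi_pos ha hb hmu j) ⟨0, by simp⟩

lemma bdH_le_one (i : ℕ) : bdH a b i ≤ 1 := by
  have htotal : ∑' j, bdPi a b j = 1 := by
    simp only [bdPi, tsum_div_const, div_self (tsum_bdMu_pos ha hb hmu).ne']
  exact htotal ▸ (hmu.div_const _).sum_le_tsum _ fun j _ => (bdPi_pos ha hb hmu j).le

lemma inv_tsum_bdMu_le_bdH (i : ℕ) : (∑' j, bdMu a b j)⁻¹ ≤ bdH a b i := by
  have hH0 : bdPi a b 0 = (∑' j, bdMu a b j)⁻¹ := by simp [bdPi, bdMu_zero]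
  exact hH0 ▸ single_le_sum (fun j _ => (bdPi_pos ha hb hmu j).le) (by simp)

lemma bdMuStar_term_eq (i : ℕ) :
    1 / (bdMuStar a b i * bdBStar a b i) * ∑ j ∈ range (i + 1), bdMuStar a b j =
      ∑ j ∈ range (i + 1), bdMu a b (i + 1) / (bdH a b i * bdH a b (i + 1)) *
        (bdH a b j ^ 2 / (bdMu a b j * b j)) :=
  bdMu_dualRates_term_eq (fun i hi => (ha i hi).ne') (fun i => (hb i).ne')
    (fun i => (bdH_pos ha hb hmu i).ne') i

lemma dual_R_eq :
    ∑' i, ENNReal.ofReal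
        (1 / (bdMuStar a b i * bdBStar a b i) * ∑ j ∈ range (i + 1), bdMuStar a b j) =
      ∑' j, ENNReal.ofReal (bdH a b j ^ 2 / (bdMu a b j * b j)) *
        ∑' k, ENNReal.ofReal
          (bdMu a b (j + k + 1) / (bdH a b (j + k) * bdH a b (j + k + 1))) := by
  have hc : ∀ i, 0 ≤ bdMu a b (i + 1) / (bdH a b i * bdH a b (i + 1)) := fun i =>
    div_nonneg (bdMu_pos ha hb _).le (mul_pos (bdH_pos ha hb hmu i) (bdH_pos ha hb hmu _)).le
  have hd : ∀ j, 0 ≤ bdH a b j ^ 2 / (bdMu a b j * b j) := fun j =>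
    div_nonneg (sq_nonneg _) (mul_pos (bdMu_pos ha hb j) (hb j)).le
  have hterm : ∀ i, ENNReal.ofReal
      (1 / (bdMuStar a b i * bdBStar a b i) * ∑ j ∈ range (i + 1), bdMuStar a b j) =
        ∑ j ∈ range (i + 1),
          ENNReal.ofReal (bdMu a b (i + 1) / (bdH a b i * bdH a b (i + 1))) *
            ENNReal.ofReal (bdH a b j ^ 2 / (bdMu a b j * b j)) := fun i => by
    rw [bdMuStar_term_eq ha hb hmu,
      ENNReal.ofReal_sum_of_nonneg fun j _ => mul_nonneg (hc i) (hd j)]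
    exact sum_congr rfl fun j _ => ENNReal.ofReal_mul (hc i)
  simp only [hterm, ENNReal.tsum_sum_range_succ_eq_tsum_tsum_add, ← ENNReal.tsum_mul_left]
  exact tsum_congr fun j => tsum_congr fun k => mul_comm _ _

lemma dual_R_le :
    ∑' i, ENNReal.ofReal
        (1 / (bdMuStar a b i * bdBStar a b i) * ∑ j ∈ range (i + 1), bdMuStar a b j) ≤
      ENNReal.ofReal ((∑' i, bdMu a b i) ^ 2) *
        ∑' k, ENNReal.ofReal (1 / (bdMu a b k * b k)) *
          ∑' i, ENNReal.ofReal (bdMu a b (k + 1 + i)) := by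
  set M := ∑' i, bdMu a b i
  have hμ := bdMu_pos ha hb
  have hH := bdH_pos ha hb hmu
  have hM : 0 < M := tsum_bdMu_pos ha hb hmu
  have hd : ∀ j, bdH a b j ^ 2 / (bdMu a b j * b j) ≤ 1 / (bdMu a b j * b j) := fun j => by
    have := hμ j; have := hb j
    gcongr
    exact pow_le_one₀ (hH j).le (bdH_le_one ha hb hmu j)
  have hc : ∀ i, bdMu a b (i + 1) / (bdH a b i * bdH a b (i + 1)) ≤ M ^ 2 * bdMu a b (i + 1) :=
    fun i => calc
      _ ≤ bdMu a b (i + 1) / (M⁻¹ * M⁻¹) :=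
        div_le_div_of_nonneg_left (hμ _).le (by positivity)
          (mul_le_mul (inv_tsum_bdMu_le_bdH ha hb hmu i) (inv_tsum_bdMu_le_bdH ha hb hmu _)
            (by positivity) (hH i).le)
      _ = M ^ 2 * bdMu a b (i + 1) := by field_simp
  rw [dual_R_eq ha hb hmu, ← ENNReal.tsum_mul_left]
  refine ENNReal.tsum_le_tsum fun j => ?_
  calc _ ≤ ENNReal.ofReal (1 / (bdMu a b j * b j)) *
        ∑' k, ENNReal.ofReal M ^ 2 * ENNReal.ofReal (bdMu a b (j + 1 + k)) := by
        refine mul_le_mul' (ENNReal.ofReal_le_ofReal (hd j)) (ENNReal.tsum_le_tsum fun k => ?_)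
        rw [← ENNReal.ofReal_pow hM.le, ← ENNReal.ofReal_mul (by positivity), add_right_comm j 1 k]
        exact ENNReal.ofReal_le_ofReal (hc _)
    _ = _ := by rw [ENNReal.tsum_mul_left, ENNReal.ofReal_pow hM.le]; ring

end Stationary

/-- with `R* = Σ_i (1/(μ*_i b*_i)) Σ_{j=0}^i μ*_j` (a value in `[0,∞]`),
one has `R* = Σ_j (H_j²/(μ_j b_j)) Σ_{i≥j} μ_{i+1}/(H_i H_{i+1})` and `R* ≤ μ²·S`, where
`S = Σ_k (1/(μ_k b_k)) Σ_{i>k} μ_i`.  In particular if `S < ∞` then `R* < ∞`. -/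
theorem dual_R_formula_and_bound
    (a b : ℕ → ℝ) (ha : ∀ i, 1 ≤ i → 0 < a i) (hb : ∀ i, 0 < b i)
    (hmu : Summable (bdMu a b)) :
    (∑' i : ℕ, ENNReal.ofReal
        ((1 / (bdMuStar a b i * bdBStar a b i)) *
          ∑ j ∈ Finset.range (i + 1), bdMuStar a b j) =
      ∑' j : ℕ, ENNReal.ofReal ((bdH a b j) ^ 2 / (bdMu a b j * b j)) *
        ∑' k : ℕ, ENNReal.ofReal
          (bdMu a b (j + k + 1) / (bdH a b (j + k) * bdH a b (j + k + 1)))) ∧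
    (∑' i : ℕ, ENNReal.ofReal
        ((1 / (bdMuStar a b i * bdBStar a b i)) *
          ∑ j ∈ Finset.range (i + 1), bdMuStar a b j) ≤
      ENNReal.ofReal ((∑' i : ℕ, bdMu a b i) ^ 2) *
        ∑' k : ℕ, ENNReal.ofReal (1 / (bdMu a b k * b k)) *
          ∑' i : ℕ, ENNReal.ofReal (bdMu a b (k + 1 + i))) ∧
    ((∑' k : ℕ, ENNReal.ofReal (1 / (bdMu a b k * b k)) *
        ∑' i : ℕ, ENNReal.ofReal (bdMu a b (k + 1 + i))) < ⊤ →
      (∑' i : ℕ, ENNReal.ofReal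
        ((1 / (bdMuStar a b i * bdBStar a b i)) *
          ∑ j ∈ Finset.range (i + 1), bdMuStar a b j)) < ⊤) :=
  ⟨dual_R_eq ha hb hmu, dual_R_le ha hb hmu, fun hS =>
    (dual_R_le ha hb hmu).trans_lt (ENNReal.mul_lt_top ENNReal.ofReal_lt_top hS)⟩
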